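/- For all MiniJl types τ1 and τ2, reductive subtyping τ1 ≤r τ2 holds if and only if NF(τ1) ≤r τ2 holds. -/
import Mathlib


/-- MiniJl types -/
inductive Ty : Type
  | pair : Ty → Ty → Ty
  | union : Ty → Ty → Ty
  | int : Ty
  | flt : Ty
  | cmplx : Ty
  | str : Ty
  | real : Ty
  | num : Ty
deriving DecidableEq

/-- Value types: concrete nominal types and pairs of value types. -/
inductive ValTy : Ty → Prop
  | int : ValTy .int
  | flt : ValTy .flt
  | cmplx : ValTy .cmplx
  | str : ValTy .str
  | pair {v1 v2 : Ty} : ValTy v1 → ValTy v2 → ValTy (.pair v1 v2)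

/-- Matching relation `v ⋖ τ`. -/
inductive Matches : Ty → Ty → Prop
  | int : Matches .int .int
  | flt : Matches .flt .flt
  | cmplx : Matches .cmplx .cmplx
  | str : Matches .str .str
  | intReal : Matches .int .real
  | fltReal : Matches .flt .real
  | intNum : Matches .int .num
  | fltNum : Matches .flt .num
  | cmplxNum : Matches .cmplx .num
  | pair {v1 v2 t1 t2 : Ty} : Matches v1 t1 → Matches v2 t2 →
      Matches (.pair v1 v2) (.pair t1 t2)
  | unionL {v t1 t2 : Ty} : Matches v t1 → Matches v (.union t1 t2)
  | unionR {v t1 t2 : Ty} : Matches v t2 → Matches v (.union t1 t2)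

/-- Matching-based semantic subtyping. -/
def SemSub (t1 t2 : Ty) : Prop :=
  ∀ v : Ty, ValTy v → Matches v t1 → Matches v t2

/-- Tag interpretation of types as sets of value types. -/
def interp : Ty → Set Ty
  | .int => {.int}
  | .flt => {.flt}
  | .cmplx => {.cmplx}
  | .str => {.str}
  | .real => {.int, .flt}
  | .num => {.int, .flt, .cmplx}
  | .pair t1 t2 => {v | ∃ v1 ∈ interp t1, ∃ v2 ∈ interp t2, v = .pair v1 v2}
  | .union t1 t2 => interp t1 ∪ interp t2

/-- Declarative subtyping. -/
inductive DeclSub : Ty → Ty → Prop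
  | refl (t : Ty) : DeclSub t t
  | trans {t1 t2 t3 : Ty} : DeclSub t1 t2 → DeclSub t2 t3 → DeclSub t1 t3
  | intReal : DeclSub .int .real
  | fltReal : DeclSub .flt .real
  | realNum : DeclSub .real .num
  | cmplxNum : DeclSub .cmplx .num
  | realUnion : DeclSub .real (.union .int .flt)
  | numUnion : DeclSub .num (.union .real .cmplx)
  | pair {t1 t2 t1' t2' : Ty} : DeclSub t1 t1' → DeclSub t2 t2' →
      DeclSub (.pair t1 t2) (.pair t1' t2')
  | unionL {t1 t2 t' : Ty} : DeclSub t1 t' → DeclSub t2 t' →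
      DeclSub (.union t1 t2) t'
  | unionR1 (t1 t2 : Ty) : DeclSub t1 (.union t1 t2)
  | unionR2 (t1 t2 : Ty) : DeclSub t2 (.union t1 t2)
  | distr1 (t11 t12 t2 : Ty) :
      DeclSub (.pair (.union t11 t12) t2)
        (.union (.pair t11 t2) (.pair t12 t2))
  | distr2 (t1 t21 t22 : Ty) :
      DeclSub (.pair t1 (.union t21 t22))
        (.union (.pair t1 t21) (.pair t1 t22))

/-- Normal form predicate. -/
inductive InNF : Ty → Prop
  | val {v : Ty} : ValTy v → InNF v
  | union {t1 t2 : Ty} : InNF t1 → InNF t2 → InNF (.union t1 t2)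

/-- Union of pairs -/
def unprs : Ty → Ty → Ty
  | .union t11 t12, t2 => .union (unprs t11 t2) (unprs t12 t2)
  | t1, .union t21 t22 => .union (unprs t1 t21) (unprs t1 t22)
  | t1, t2 => .pair t1 t2

/-- Normalization function. -/
def NF : Ty → Ty
  | .int => .int
  | .flt => .flt
  | .cmplx => .cmplx
  | .str => .str
  | .real => .union .int .flt
  | .num => .union (.union .int .flt) .cmplx
  | .pair t1 t2 => unprs (NF t1) (NF t2)
  | .union t1 t2 => .union (NF t1) (NF t2)

/-- Reductive subtyping. -/
inductive RedSub : Ty → Ty → Prop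
  | intRefl : RedSub .int .int
  | fltRefl : RedSub .flt .flt
  | cmplxRefl : RedSub .cmplx .cmplx
  | strRefl : RedSub .str .str
  | intReal : RedSub .int .real
  | fltReal : RedSub .flt .real
  | cmplxNum : RedSub .cmplx .num
  | intNum : RedSub .int .num
  | fltNum : RedSub .flt .num
  | pair {t1 t2 t1' t2' : Ty} : RedSub t1 t1' → RedSub t2 t2' →
      RedSub (.pair t1 t2) (.pair t1' t2')
  | unionL {t1 t2 t' : Ty} : RedSub t1 t' → RedSub t2 t' →
      RedSub (.union t1 t2) t'
  | unionR1 {t t1' t2' : Ty} : RedSub t t1' → RedSub t (.union t1' t2')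
  | unionR2 {t t1' t2' : Ty} : RedSub t t2' → RedSub t (.union t1' t2')
  | nf {t t' : Ty} : RedSub (NF t) t' → RedSub t t'


lemma union_inv_aux : ∀ {u t : Ty}, RedSub u t → ∀ a1 a2, u = .union a1 a2 →
    RedSub a1 t ∧ RedSub a2 t := by
  intro u t h
  induction h with
  | unionL h1 h2 ih1 ih2 =>
      intro a1 a2 he; cases he; exact ⟨‹_›, ‹_›⟩
  | unionR1 h ih =>
      intro a1 a2 he; subst he
      obtain ⟨p, q⟩ := ih a1 a2 rfl
      exact ⟨.unionR1 p, .unionR1 q⟩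
  | unionR2 h ih =>
      intro a1 a2 he; subst he
      obtain ⟨p, q⟩ := ih a1 a2 rfl
      exact ⟨.unionR2 p, .unionR2 q⟩
  | nf h ih =>
      intro a1 a2 he; subst he
      obtain ⟨p, q⟩ := ih (NF a1) (NF a2) (by simp [NF])
      exact ⟨.nf p, .nf q⟩
  | _ => intro a1 a2 he; cases he

lemma union_inv {a1 a2 t : Ty} (h : RedSub (.union a1 a2) t) :
    RedSub a1 t ∧ RedSub a2 t := union_inv_aux h a1 a2 rfl

lemma unprs_sub : ∀ (a b : Ty) {t1' t2'}, RedSub a t1' → RedSub b t2' →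
    RedSub (unprs a b) (.pair t1' t2') := by
  intro a
  induction a with
  | union a1 a2 ih1 ih2 =>
      intro b t1' t2' ha hb
      obtain ⟨p, q⟩ := union_inv ha
      simp only [unprs]
      exact .unionL (ih1 b p hb) (ih2 b q hb)
  | _ =>
      intro b
      induction b with
      | union b1 b2 ih1 ih2 =>
          intro t1' t2' ha hb
          obtain ⟨p, q⟩ := union_inv hb
          simp only [unprs]
          exact .unionL (ih1 ha p) (ih2 ha q)
      | _ => intro t1' t2' ha hb; simp only [unprs]; exact .pair ha hb

lemma redSub_nf {t1 t2 : Ty} (h : RedSub t1 t2) : RedSub (NF t1) t2 := by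
  induction h with
  | pair h1 h2 ih1 ih2 => exact unprs_sub _ _ ih1 ih2
  | unionL h1 h2 ih1 ih2 => exact .unionL ih1 ih2
  | unionR1 h ih => exact .unionR1 ih
  | unionR2 h ih => exact .unionR2 ih
  | nf h ih => exact h
  | intRefl => exact .intRefl
  | fltRefl => exact .fltRefl
  | cmplxRefl => exact .cmplxRefl
  | strRefl => exact .strRefl
  | intReal => exact .intReal
  | fltReal => exact .fltReal
  | cmplxNum => exact .cmplxNum
  | intNum => exact .intNum
  | fltNum => exact .fltNum

theorem redSub_iff_nf_redSub (t1 t2 : Ty) : RedSub t1 t2 ↔ RedSub (NF t1) t2 := by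
  exact ⟨redSub_nf, .nf⟩
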